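/- arXiv:1604.02216 — 2 statements merged into one kernel-verified Lean document; each statement's English description precedes it below -/
import Mathlib

section
/- Let x* ∈ X be an optimal solution of min{ f(x) : g_k(x) ≤ 0 ∀k, x ∈ X }, let λ* ≥ 0 (componentwise) satisfy inf_{x ∈ X}( f(x) + Σ_k λ*_k g_k(x) ) = f(x*), and set D = β² + L_f + 2‖λ*‖‖L_g‖ + 2C‖L_g‖. If the step size γ > 0 satisfies D + ‖L_g‖·R/√γ − 1/γ ≤ 0, then at every iteration t ≥ 0 of the algorithm, with Δ(t) = (1/2)(‖Q(t+1)‖² − ‖Q(t)‖²), one has Δ(t) + f(x(t)) ≤ f(x*) + (1/(2γ))(‖x* − x(t−1)‖² − ‖x* − x(t)‖²) + (1/2)(‖g(x(t))‖² − ‖g(x(t−1))‖²). -/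
/-!
With the multipliers `μ = Q(t) + g(x(t-1)) ≥ 0`, one iteration is a projected gradient step on the
Lagrangian `f + ⟪μ, g⟫`, which is convex with `(L_f + ⟪μ, L_g⟫)`-Lipschitz gradient, while the
queue update adds `⟪μ, g(x(t))⟫` plus an error of at most `β²/2 ‖x(t) - x(t-1)‖²` to the drift.
What is left is a multiple of `‖x(t) - x(t-1)‖²` whose coefficient the step-size condition makes
nonpositive as soon as `‖Q(t)‖ ≤ 2‖λ*‖ + C + R/√γ`. This queue bound propagates by induction:
by the dual inequality `f(x*) ≤ f(x) + ⟪λ*, g(x)⟫` and `g(x(t)) ≤ Q(t+1) - Q(t)`, the bound at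
time `t` makes `½‖Q - λ*‖² + ‖x* - x‖²/(2γ) - ½‖g(x)‖²` non-increasing.
-/

/-- The stacked constraint vector `g(x) = (g_1(x), …, g_m(x))` as an element of
Euclidean space `ℝ^m`. -/
noncomputable def gvec {n m : ℕ} (g : Fin m → EuclideanSpace ℝ (Fin n) → ℝ)
    (x : EuclideanSpace ℝ (Fin n)) : EuclideanSpace ℝ (Fin m) :=
  WithLp.toLp 2 (fun k => g k x)

open Finset AffineMap Set
open scoped RealInnerProductSpace

section ProjectedGradient

variable {E : Type*} [NormedAddCommGroup E] [InnerProductSpace ℝ E] {K : Set E}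

theorem inner_sub_le_of_forall_norm_sub_le (hK : Convex ℝ K) {a v y d : E} {γ : ℝ} (hγ : 0 < γ)
    (hv : v ∈ K) (hy : y ∈ K) (hproj : ∀ w ∈ K, ‖v - (a - γ • d)‖ ≤ ‖w - (a - γ • d)‖) :
    ⟪d, v - y⟫ ≤ (‖y - a‖ ^ 2 - ‖y - v‖ ^ 2 - ‖v - a‖ ^ 2) / (2 * γ) := by
  have hmin : ‖(a - γ • d) - v‖ = ⨅ w : K, ‖(a - γ • d) - w‖ := by
    have : Nonempty K := ⟨⟨v, hv⟩⟩
    refine le_antisymm (le_ciInf fun w => ?_) (ciInf_le ?_ (⟨v, hv⟩ : K))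
    · simpa only [norm_sub_rev] using hproj w w.2
    · exact ⟨0, by rintro _ ⟨w, rfl⟩; exact norm_nonneg _⟩
  have hvar := (norm_eq_iInf_iff_real_inner_le_zero hK hv).1 hmin y hy
  rw [show a - γ • d - v = (a - v) - γ • d by abel, inner_sub_left, real_inner_smul_left] at hvar
  have hpolar : 2 * ⟪a - v, y - v⟫ = ‖y - v‖ ^ 2 + ‖v - a‖ ^ 2 - ‖y - a‖ ^ 2 := by
    have := norm_sub_sq_real (y - v) (a - v)
    rw [show y - v - (a - v) = y - a by abel, real_inner_comm, norm_sub_rev a v] at this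
    linarith
  rw [le_div_iff₀ (by positivity), ← neg_sub y v, inner_neg_right]
  linarith

variable {ι : Type*} [Fintype ι] {f : E → ℝ} {g : ι → E → ℝ} {Gf : E → E} {Gg : ι → E → E}
  {Lf : ℝ} {Lg : ι → ℝ} {μ : ι → ℝ}

theorem convexOn_add_sum_mul (hK : Convex ℝ K) (hf : ConvexOn ℝ K f)
    (hg : ∀ k, ConvexOn ℝ K (g k)) (hμ : ∀ k, 0 ≤ μ k) :
    ConvexOn ℝ K (fun z => f z + ∑ k, μ k * g k z) := by
  refine hf.add ?_
  have := Finset.sum_induction (s := univ) (fun k z => μ k * g k z) (ConvexOn ℝ K)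
    (fun _ _ => ConvexOn.add) (convexOn_const 0 hK) fun k _ => (hg k).smul (hμ k)
  simpa only [Finset.sum_fn] using this

theorem norm_add_sum_smul_sub_le (hμ : ∀ k, 0 ≤ μ k)
    (hGf : ∀ z ∈ K, ∀ w ∈ K, ‖Gf z - Gf w‖ ≤ Lf * ‖z - w‖)
    (hGg : ∀ k, ∀ z ∈ K, ∀ w ∈ K, ‖Gg k z - Gg k w‖ ≤ Lg k * ‖z - w‖) {z w : E}
    (hz : z ∈ K) (hw : w ∈ K) :
    ‖(Gf z + ∑ k, μ k • Gg k z) - (Gf w + ∑ k, μ k • Gg k w)‖ ≤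
      (Lf + ∑ k, μ k * Lg k) * ‖z - w‖ := by
  rw [add_sub_add_comm, ← Finset.sum_sub_distrib, add_mul, Finset.sum_mul]
  refine (norm_add_le _ _).trans (add_le_add (hGf z hz w hw) ?_)
  refine (norm_sum_le _ _).trans (Finset.sum_le_sum fun k _ => ?_)
  rw [← smul_sub, norm_smul, Real.norm_of_nonneg (hμ k), mul_assoc]
  exact mul_le_mul_of_nonneg_left (hGg k z hz w hw) (hμ k)

variable [CompleteSpace E]

theorem HasGradientAt.hasDerivAt_comp_lineMap {F : E → ℝ} {g a b : E} {s : ℝ}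
    (h : HasGradientAt F g (lineMap a b s)) :
    HasDerivAt (fun s => F (lineMap a b s)) ⟪g, b - a⟫ s := by
  have := h.hasFDerivAt.comp_hasDerivAt s hasDerivAt_lineMap
  simp only [InnerProductSpace.toDual_apply_apply] at this
  exact this

theorem ConvexOn.add_inner_le_of_hasGradientAt {F : E → ℝ} (hF : ConvexOn ℝ K F) {g a b : E}
    (hg : HasGradientAt F g a) (ha : a ∈ K) (hb : b ∈ K) : F a + ⟪g, b - a⟫ ≤ F b := by
  have hslope := (hF.comp_affineMap (lineMap a b)).le_slope_of_hasDerivAt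
    (x := 0) (y := 1) (by simpa using ha) (by simpa using hb) one_pos
    (HasGradientAt.hasDerivAt_comp_lineMap (by simpa using hg))
  simp only [slope_def_field, Function.comp_apply, lineMap_apply_one, lineMap_apply_zero, sub_zero,
    div_one] at hslope
  linarith

theorem le_add_inner_add_of_lipschitz_gradient {F : E → ℝ} {G : E → E} {L : ℝ}
    (hK : Convex ℝ K) (hG : ∀ z ∈ K, HasGradientAt F (G z) z)
    (hGLip : ∀ z ∈ K, ∀ w ∈ K, ‖G z - G w‖ ≤ L * ‖z - w‖) {a b : E} (ha : a ∈ K) (hb : b ∈ K) :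
    F b ≤ F a + ⟪G a, b - a⟫ + L / 2 * ‖b - a‖ ^ 2 := by
  have hseg : MapsTo (lineMap a b) (Icc (0 : ℝ) 1) K := hK.mapsTo_lineMap ha hb
  set φ : ℝ → ℝ := fun s => F (lineMap a b s) - s * ⟪G a, b - a⟫ - L / 2 * s ^ 2 * ‖b - a‖ ^ 2
  have hφ : ∀ s ∈ Icc (0 : ℝ) 1, HasDerivAt φ
      (⟪G (lineMap a b s) - G a, b - a⟫ - L * s * ‖b - a‖ ^ 2) s := by
    intro s hs
    have := ((hG _ (hseg hs)).hasDerivAt_comp_lineMap.sub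
      ((hasDerivAt_id s).mul_const ⟪G a, b - a⟫)).sub
      (((hasDerivAt_pow 2 s).const_mul (L / 2)).mul_const (‖b - a‖ ^ 2))
    refine this.congr_deriv ?_
    rw [inner_sub_left]; push_cast; ring
  have hanti : AntitoneOn φ (Icc 0 1) := by
    refine antitoneOn_of_hasDerivWithinAt_nonpos (convex_Icc 0 1)
      (fun s hs => (hφ s hs).continuousAt.continuousWithinAt)
      (fun s hs => (hφ s (interior_subset hs)).hasDerivWithinAt) fun s hs => ?_
    rw [interior_Icc] at hs
    have hdist : ‖lineMap a b s - a‖ = s * ‖b - a‖ := by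
      rw [lineMap_apply, vadd_eq_add, add_sub_cancel_right, norm_smul,
        Real.norm_of_nonneg hs.1.le, vsub_eq_sub]
    rw [sub_nonpos]
    calc ⟪G (lineMap a b s) - G a, b - a⟫ ≤ ‖G (lineMap a b s) - G a‖ * ‖b - a‖ :=
          real_inner_le_norm _ _
      _ ≤ L * ‖lineMap a b s - a‖ * ‖b - a‖ := by
          gcongr
          exact hGLip _ (hseg (Ioo_subset_Icc_self hs)) _ ha
      _ = L * s * ‖b - a‖ ^ 2 := by rw [hdist]; ring
  have := hanti (left_mem_Icc.2 zero_le_one) (right_mem_Icc.2 zero_le_one) zero_le_one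
  simp only [φ, lineMap_apply_one, lineMap_apply_zero] at this
  linarith

theorem projected_gradient_step_le {F : E → ℝ} {G : E → E} {L : ℝ} (hK : Convex ℝ K)
    (hF : ConvexOn ℝ K F) (hG : ∀ z ∈ K, HasGradientAt F (G z) z)
    (hGLip : ∀ z ∈ K, ∀ w ∈ K, ‖G z - G w‖ ≤ L * ‖z - w‖) {γ : ℝ} (hγ : 0 < γ) {a v y : E}
    (ha : a ∈ K) (hv : v ∈ K) (hy : y ∈ K)
    (hproj : ∀ w ∈ K, ‖v - (a - γ • G a)‖ ≤ ‖w - (a - γ • G a)‖) :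
    F v ≤ F y + 1 / (2 * γ) * (‖y - a‖ ^ 2 - ‖y - v‖ ^ 2)
      + (L / 2 - 1 / (2 * γ)) * ‖v - a‖ ^ 2 := by
  have hdescent := le_add_inner_add_of_lipschitz_gradient hK hG hGLip ha hv
  have hgrad := hF.add_inner_le_of_hasGradientAt (hG a ha) ha hy
  have hprox := inner_sub_le_of_forall_norm_sub_le hK hγ hv hy hproj
  have hsplit : ⟪G a, v - a⟫ = ⟪G a, v - y⟫ + ⟪G a, y - a⟫ := by
    rw [← inner_add_right, sub_add_sub_cancel]
  have hdiv : (‖y - a‖ ^ 2 - ‖y - v‖ ^ 2 - ‖v - a‖ ^ 2) / (2 * γ) =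
      1 / (2 * γ) * (‖y - a‖ ^ 2 - ‖y - v‖ ^ 2) - 1 / (2 * γ) * ‖v - a‖ ^ 2 := by ring
  linarith

theorem hasGradientAt_add_sum_mul {z : E} (hf : HasGradientAt f (Gf z) z)
    (hg : ∀ k, HasGradientAt (g k) (Gg k z) z) :
    HasGradientAt (fun z => f z + ∑ k, μ k * g k z) (Gf z + ∑ k, μ k • Gg k z) z := by
  rw [hasGradientAt_iff_hasFDerivAt, map_add, map_sum]
  simp only [map_smul]
  exact hf.hasFDerivAt.add (HasFDerivAt.fun_sum fun k _ => (hg k).hasFDerivAt.const_mul (μ k))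

theorem lagrangian_projected_gradient_step_le (hK : Convex ℝ K) (hf : ConvexOn ℝ K f)
    (hg : ∀ k, ConvexOn ℝ K (g k)) (hfd : ∀ z ∈ K, HasGradientAt f (Gf z) z)
    (hgd : ∀ k, ∀ z ∈ K, HasGradientAt (g k) (Gg k z) z)
    (hGf : ∀ z ∈ K, ∀ w ∈ K, ‖Gf z - Gf w‖ ≤ Lf * ‖z - w‖)
    (hGg : ∀ k, ∀ z ∈ K, ∀ w ∈ K, ‖Gg k z - Gg k w‖ ≤ Lg k * ‖z - w‖) (hμ : ∀ k, 0 ≤ μ k)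
    {γ : ℝ} (hγ : 0 < γ) {a v y : E} (ha : a ∈ K) (hv : v ∈ K) (hy : y ∈ K)
    (hy_feas : ∀ k, g k y ≤ 0)
    (hproj : ∀ w ∈ K, ‖v - (a - γ • (Gf a + ∑ k, μ k • Gg k a))‖ ≤
      ‖w - (a - γ • (Gf a + ∑ k, μ k • Gg k a))‖) :
    f v + ∑ k, μ k * g k v ≤ f y + 1 / (2 * γ) * (‖y - a‖ ^ 2 - ‖y - v‖ ^ 2)
      + ((Lf + ∑ k, μ k * Lg k) / 2 - 1 / (2 * γ)) * ‖v - a‖ ^ 2 := by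
  have hstep := projected_gradient_step_le hK (convexOn_add_sum_mul hK hf hg hμ)
    (fun z hz => hasGradientAt_add_sum_mul (hfd z hz) fun k => hgd k z hz)
    (fun z hz w hw => norm_add_sum_smul_sub_le hμ hGf hGg hz hw) hγ ha hv hy hproj
  have hpenalty : ∑ k, μ k * g k y ≤ 0 :=
    Finset.sum_nonpos fun k _ => mul_nonpos_of_nonneg_of_nonpos (hμ k) (hy_feas k)
  linarith

end ProjectedGradient

section VirtualQueue

variable {ι : Type*} [Fintype ι] {q q' c : EuclideanSpace ℝ ι}

theorem norm_sq_le_of_eq_max (hq' : ∀ k, q' k = max (-c k) (q k + c k)) :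
    ‖q'‖ ^ 2 ≤ ‖c‖ ^ 2 + ‖q + c‖ ^ 2 := by
  simp only [EuclideanSpace.norm_sq_eq, Real.norm_eq_abs, sq_abs, ← Finset.sum_add_distrib]
  refine Finset.sum_le_sum fun k _ => ?_
  rw [hq', PiLp.add_apply]
  rcases max_cases (-c k) (q k + c k) with ⟨h, _⟩ | ⟨h, _⟩ <;> rw [h] <;> nlinarith

theorem half_drift_le (hq' : ∀ k, q' k = max (-c k) (q k + c k)) (b : EuclideanSpace ℝ ι) :
    1 / 2 * (‖q'‖ ^ 2 - ‖q‖ ^ 2) ≤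
      ⟪q + b, c⟫ + 1 / 2 * (‖c‖ ^ 2 - ‖b‖ ^ 2) + 1 / 2 * ‖c - b‖ ^ 2 := by
  have := norm_sq_le_of_eq_max hq'
  rw [norm_add_sq_real] at this
  rw [norm_sub_sq_real, inner_add_left, real_inner_comm c b]
  linarith

end VirtualQueue

section DriftPlusPenalty

variable {n m : ℕ} {X : Set (EuclideanSpace ℝ (Fin n))} {f : EuclideanSpace ℝ (Fin n) → ℝ}
  {Gf : EuclideanSpace ℝ (Fin n) → EuclideanSpace ℝ (Fin n)}
  {g : Fin m → EuclideanSpace ℝ (Fin n) → ℝ}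
  {Gg : Fin m → EuclideanSpace ℝ (Fin n) → EuclideanSpace ℝ (Fin n)}
  {Lf β C γ : ℝ} {Lg lam : EuclideanSpace ℝ (Fin m)} {xstar : EuclideanSpace ℝ (Fin n)}

theorem drift_plus_penalty_step_le (hX : Convex ℝ X) (hf : ConvexOn ℝ X f)
    (hfd : ∀ z ∈ X, HasGradientAt f (Gf z) z)
    (hGfLip : ∀ z ∈ X, ∀ w ∈ X, ‖Gf z - Gf w‖ ≤ Lf * ‖z - w‖)
    (hg : ∀ k, ConvexOn ℝ X (g k)) (hgd : ∀ k, ∀ z ∈ X, HasGradientAt (g k) (Gg k z) z)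
    (hGgLip : ∀ k, ∀ z ∈ X, ∀ w ∈ X, ‖Gg k z - Gg k w‖ ≤ Lg k * ‖z - w‖)
    (hxs : xstar ∈ X) (hxs_feas : ∀ k, g k xstar ≤ 0) (hγ : 0 < γ)
    {a v : EuclideanSpace ℝ (Fin n)} (ha : a ∈ X) (hv : v ∈ X) {q q' : EuclideanSpace ℝ (Fin m)}
    (hq' : ∀ k, q' k = max (-g k v) (q k + g k v)) (hμ : ∀ k, 0 ≤ q k + g k a)
    (hproj : ∀ w ∈ X, ‖v - (a - γ • (Gf a + ∑ k, (q k + g k a) • Gg k a))‖ ≤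
      ‖w - (a - γ • (Gf a + ∑ k, (q k + g k a) • Gg k a))‖)
    (hgLip : ‖gvec g v - gvec g a‖ ≤ β * ‖v - a‖)
    (hcoef : β ^ 2 + Lf + ‖q + gvec g a‖ * ‖Lg‖ ≤ 1 / γ) :
    1 / 2 * (‖q'‖ ^ 2 - ‖q‖ ^ 2) + f v ≤
      f xstar + 1 / (2 * γ) * (‖xstar - a‖ ^ 2 - ‖xstar - v‖ ^ 2)
        + 1 / 2 * (‖gvec g v‖ ^ 2 - ‖gvec g a‖ ^ 2) := by
  have hlagr := lagrangian_projected_gradient_step_le hX hf hg hfd hgd hGfLip hGgLip hμ hγ ha hv hxs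
    hxs_feas hproj
  have hpenalty : ⟪q + gvec g a, gvec g v⟫ = ∑ k, (q k + g k a) * g k v := by
    simp [PiLp.inner_apply, gvec, mul_comm]
  have hdrift := half_drift_le (c := gvec g v) hq' (gvec g a)
  have hgdiff : ‖gvec g v - gvec g a‖ ^ 2 ≤ β ^ 2 * ‖v - a‖ ^ 2 := by
    rw [← mul_pow]; exact pow_le_pow_left₀ (norm_nonneg _) hgLip 2
  have hLg : ∑ k, (q k + g k a) * Lg k ≤ ‖q + gvec g a‖ * ‖Lg‖ := by
    refine le_trans (le_of_eq ?_) (real_inner_le_norm (q + gvec g a) Lg)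
    simp [PiLp.inner_apply, gvec, mul_comm]
  have hcoef' : (β ^ 2 + Lf + ∑ k, (q k + g k a) * Lg k) / 2 - 1 / (2 * γ) ≤ 0 := by
    rw [← one_div_mul_one_div, one_div_mul_eq_div]; linarith
  have hcoef'' := mul_nonpos_of_nonpos_of_nonneg hcoef' (sq_nonneg ‖v - a‖)
  linarith

theorem queue_add_constraint_nonneg {x : ℕ → EuclideanSpace ℝ (Fin n)}
    {Q : ℕ → EuclideanSpace ℝ (Fin m)} (hQ0 : ∀ k, Q 0 k = max 0 (-g k (x 0)))
    (hQr : ∀ t k, Q (t + 1) k = max (-g k (x (t + 1))) (Q t k + g k (x (t + 1)))) :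
    ∀ t k, 0 ≤ Q t k + g k (x t)
  | 0, k => by linarith [hQ0 k ▸ le_max_right 0 (-g k (x 0))]
  | t + 1, k => by linarith [hQr t k ▸ le_max_left (-g k (x (t + 1))) (Q t k + g k (x (t + 1)))]

variable (g γ lam xstar) in
noncomputable def lyapunov (q : EuclideanSpace ℝ (Fin m)) (z : EuclideanSpace ℝ (Fin n)) : ℝ :=
  1 / 2 * ‖q - lam‖ ^ 2 + 1 / (2 * γ) * ‖xstar - z‖ ^ 2 - 1 / 2 * ‖gvec g z‖ ^ 2

theorem lyapunov_initial_le {R : ℝ} (hγ : 0 < γ) {q : EuclideanSpace ℝ (Fin m)}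
    {z : EuclideanSpace ℝ (Fin n)} (hq : ∀ k, q k = max 0 (-g k z)) (hlam : ∀ k, 0 ≤ lam k)
    (hR : ‖xstar - z‖ ≤ R) :
    lyapunov g γ lam xstar q z ≤ 1 / 2 * ‖lam‖ ^ 2 + R ^ 2 / (2 * γ) := by
  have hq_sq : ‖q‖ ^ 2 ≤ ‖gvec g z‖ ^ 2 := by
    simp only [EuclideanSpace.norm_sq_eq, Real.norm_eq_abs, sq_abs]
    refine Finset.sum_le_sum fun k _ => ?_
    rw [hq]
    show _ ≤ g k z ^ 2
    rcases max_cases 0 (-g k z) with ⟨h, _⟩ | ⟨h, _⟩ <;> rw [h] <;> nlinarith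
  have hq_lam : 0 ≤ ⟪q, lam⟫ := by
    simp only [PiLp.inner_apply, RCLike.inner_apply, conj_trivial]
    exact Finset.sum_nonneg fun k _ => mul_nonneg (hlam k) (by rw [hq]; exact le_max_left _ _)
  have hdist : 1 / (2 * γ) * ‖xstar - z‖ ^ 2 ≤ R ^ 2 / (2 * γ) := by
    rw [one_div_mul_eq_div]
    gcongr
  rw [lyapunov, norm_sub_sq_real]
  linarith

theorem lyapunov_succ_le (hlam : ∀ k, 0 ≤ lam k) {a v : EuclideanSpace ℝ (Fin n)}
    {q q' : EuclideanSpace ℝ (Fin m)} (hq' : ∀ k, q' k = max (-g k v) (q k + g k v))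
    (hdual : f xstar ≤ f v + ∑ k, lam k * g k v)
    (hstep : 1 / 2 * (‖q'‖ ^ 2 - ‖q‖ ^ 2) + f v ≤
      f xstar + 1 / (2 * γ) * (‖xstar - a‖ ^ 2 - ‖xstar - v‖ ^ 2)
        + 1 / 2 * (‖gvec g v‖ ^ 2 - ‖gvec g a‖ ^ 2)) :
    lyapunov g γ lam xstar q' v ≤ lyapunov g γ lam xstar q a := by
  have hinner : ∑ k, lam k * g k v ≤ ⟪q' - q, lam⟫ := by
    simp only [PiLp.inner_apply, RCLike.inner_apply, conj_trivial, PiLp.sub_apply]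
    refine Finset.sum_le_sum fun k _ => mul_le_mul_of_nonneg_left ?_ (hlam k)
    linarith [hq' k ▸ le_max_right (-g k v) (q k + g k v)]
  rw [inner_sub_left] at hinner
  rw [lyapunov, lyapunov, norm_sub_sq_real q' lam, norm_sub_sq_real q lam]
  linarith

theorem norm_le_of_lyapunov_le {R : ℝ} (hγ : 0 < γ) (hR : 0 ≤ R) {q : EuclideanSpace ℝ (Fin m)}
    {z : EuclideanSpace ℝ (Fin n)} (hC : ‖gvec g z‖ ≤ C)
    (hV : lyapunov g γ lam xstar q z ≤ 1 / 2 * ‖lam‖ ^ 2 + R ^ 2 / (2 * γ)) :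
    ‖q‖ ≤ 2 * ‖lam‖ + C + R / Real.sqrt γ := by
  have hC0 : 0 ≤ C := (norm_nonneg _).trans hC
  have hRγ0 : 0 ≤ R / Real.sqrt γ := by positivity
  have hRγ : R ^ 2 / (2 * γ) = 1 / 2 * (R / Real.sqrt γ) ^ 2 := by
    rw [div_pow, Real.sq_sqrt hγ.le]; ring
  have hsq : ‖q - lam‖ ^ 2 ≤ (‖lam‖ + R / Real.sqrt γ + C) ^ 2 := by
    have : 0 ≤ 1 / (2 * γ) * ‖xstar - z‖ ^ 2 := by positivity
    have : ‖gvec g z‖ ^ 2 ≤ C ^ 2 := pow_le_pow_left₀ (norm_nonneg _) hC 2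
    rw [lyapunov] at hV
    nlinarith [mul_nonneg (norm_nonneg lam) hRγ0, mul_nonneg (norm_nonneg lam) hC0,
      mul_nonneg hRγ0 hC0]
  have := abs_le_of_sq_le_sq' hsq (by positivity)
  linarith [norm_sub_norm_le q lam, this.2]

end DriftPlusPenalty

/-- Indexing convention: `x 0` denotes the initial point `x(−1)` and `x (t+1)`
denotes the iterate `x(t)`; thus at iteration `t` of the paper,
`x(t) = x (t+1)`, `x(t−1) = x t`, and `Q(t) = Q t`. -/
theorem drift_plus_penalty_refined_bound_general {n m : ℕ}
    (X : Set (EuclideanSpace ℝ (Fin n)))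
    (hXcv : Convex ℝ X)
    (R : ℝ) (hR : ∀ z ∈ X, ∀ w ∈ X, ‖z - w‖ ≤ R)
    (f : EuclideanSpace ℝ (Fin n) → ℝ)
    (Gf : EuclideanSpace ℝ (Fin n) → EuclideanSpace ℝ (Fin n))
    (g : Fin m → EuclideanSpace ℝ (Fin n) → ℝ)
    (Gg : Fin m → EuclideanSpace ℝ (Fin n) → EuclideanSpace ℝ (Fin n))
    (Lf : ℝ) (Lg : EuclideanSpace ℝ (Fin m)) (β C : ℝ)
    (hf : ConvexOn ℝ X f)
    (hfd : ∀ z, HasGradientAt f (Gf z) z)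
    (hGfLip : ∀ z ∈ X, ∀ w ∈ X, ‖Gf z - Gf w‖ ≤ Lf * ‖z - w‖)
    (hg : ∀ k, ConvexOn ℝ X (g k))
    (hgd : ∀ (k : Fin m) z, HasGradientAt (g k) (Gg k z) z)
    (hGgLip : ∀ (k : Fin m), ∀ z ∈ X, ∀ w ∈ X, ‖Gg k z - Gg k w‖ ≤ Lg k * ‖z - w‖)
    (hgLip : ∀ z ∈ X, ∀ w ∈ X, ‖gvec g z - gvec g w‖ ≤ β * ‖z - w‖)
    (hgC : ∀ z ∈ X, ‖gvec g z‖ ≤ C)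
    (xstar : EuclideanSpace ℝ (Fin n)) (hxs : xstar ∈ X)
    (hxsFeas : ∀ k, g k xstar ≤ 0)
    (lam : EuclideanSpace ℝ (Fin m)) (hlam : ∀ k, 0 ≤ lam k)
    (hduality : IsGLB ((fun z => f z + ∑ k, lam k * g k z) '' X) (f xstar))
    (D : ℝ) (hD : D = β ^ 2 + Lf + 2 * ‖lam‖ * ‖Lg‖ + 2 * C * ‖Lg‖)
    (γ : ℝ) (hγ : 0 < γ)
    (hγcond : D + ‖Lg‖ * R / Real.sqrt γ - 1 / γ ≤ 0)
    (x : ℕ → EuclideanSpace ℝ (Fin n)) (hxX : ∀ t, x t ∈ X)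
    (Q : ℕ → EuclideanSpace ℝ (Fin m))
    (hQ0 : ∀ k, Q 0 k = max 0 (-(g k (x 0))))
    (hQr : ∀ (t : ℕ) (k : Fin m),
      Q (t + 1) k = max (-(g k (x (t + 1)))) (Q t k + g k (x (t + 1))))
    (d : ℕ → EuclideanSpace ℝ (Fin n))
    (hd : ∀ t, d t = Gf (x t) + ∑ k, (Q t k + g k (x t)) • Gg k (x t))
    (hproj : ∀ t, ∀ y ∈ X,
      ‖x (t + 1) - (x t - γ • d t)‖ ≤ ‖y - (x t - γ • d t)‖) :
    ∀ t : ℕ,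
      (1 / 2) * (‖Q (t + 1)‖ ^ 2 - ‖Q t‖ ^ 2) + f (x (t + 1)) ≤
        f xstar + (1 / (2 * γ)) * (‖xstar - x t‖ ^ 2 - ‖xstar - x (t + 1)‖ ^ 2)
          + (1 / 2) * (‖gvec g (x (t + 1))‖ ^ 2 - ‖gvec g (x t)‖ ^ 2) := by

  have hR0 : 0 ≤ R := by simpa using hR xstar hxs xstar hxs
  have hstep : ∀ t, ‖Q t‖ ≤ 2 * ‖lam‖ + C + R / Real.sqrt γ →
      (1 / 2) * (‖Q (t + 1)‖ ^ 2 - ‖Q t‖ ^ 2) + f (x (t + 1)) ≤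
        f xstar + (1 / (2 * γ)) * (‖xstar - x t‖ ^ 2 - ‖xstar - x (t + 1)‖ ^ 2)
          + (1 / 2) * (‖gvec g (x (t + 1))‖ ^ 2 - ‖gvec g (x t)‖ ^ 2) := by
    intro t hQt
    refine drift_plus_penalty_step_le hXcv hf (fun z _ => hfd z) hGfLip hg (fun k z _ => hgd k z)
      hGgLip hxs hxsFeas hγ (hxX t) (hxX (t + 1)) (hQr t)
      (queue_add_constraint_nonneg hQ0 hQr t) (hd t ▸ hproj t)
      (hgLip _ (hxX _) _ (hxX _)) ?_
    have hmult : ‖Q t + gvec g (x t)‖ * ‖Lg‖ ≤ (2 * ‖lam‖ + 2 * C + R / Real.sqrt γ) * ‖Lg‖ :=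
      mul_le_mul_of_nonneg_right ((norm_add_le _ _).trans (by linarith [hgC _ (hxX t)]))
        (norm_nonneg Lg)
    rw [hD] at hγcond
    linear_combination hmult + hγcond
  have hV : ∀ t, lyapunov g γ lam xstar (Q t) (x t) ≤ 1 / 2 * ‖lam‖ ^ 2 + R ^ 2 / (2 * γ) := by
    intro t
    induction t with
    | zero => exact lyapunov_initial_le hγ hQ0 hlam (hR _ hxs _ (hxX 0))
    | succ t ih =>
      exact (lyapunov_succ_le hlam (hQr t) (hduality.1 ⟨x (t + 1), hxX (t + 1), rfl⟩)
        (hstep t (norm_le_of_lyapunov_le hγ hR0 (hgC _ (hxX t)) ih))).trans ih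
  exact fun t => hstep t (norm_le_of_lyapunov_le hγ hR0 (hgC _ (hxX t)) (hV t))

/-- Refined drift-plus-penalty bound (Lemma 7, part 2 of the paper).
Indexing convention: `x 0` denotes the initial point `x(−1)` and `x (t+1)`
denotes the iterate `x(t)`; thus at iteration `t` of the paper,
`x(t) = x (t+1)`, `x(t−1) = x t`, and `Q(t) = Q t`. -/
theorem drift_plus_penalty_refined_bound {n m : ℕ}
    (X : Set (EuclideanSpace ℝ (Fin n)))
    (hXne : X.Nonempty) (hXcv : Convex ℝ X) (hXcp : IsCompact X)
    (R : ℝ) (hR : ∀ z ∈ X, ∀ w ∈ X, ‖z - w‖ ≤ R)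
    (f : EuclideanSpace ℝ (Fin n) → ℝ)
    (Gf : EuclideanSpace ℝ (Fin n) → EuclideanSpace ℝ (Fin n))
    (g : Fin m → EuclideanSpace ℝ (Fin n) → ℝ)
    (Gg : Fin m → EuclideanSpace ℝ (Fin n) → EuclideanSpace ℝ (Fin n))
    (Lf : ℝ) (Lg : EuclideanSpace ℝ (Fin m)) (β C : ℝ)
    (hf : ConvexOn ℝ X f)
    (hfd : ∀ z, HasGradientAt f (Gf z) z)
    (hLf : 0 ≤ Lf)
    (hGfLip : ∀ z ∈ X, ∀ w ∈ X, ‖Gf z - Gf w‖ ≤ Lf * ‖z - w‖)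
    (hg : ∀ k, ConvexOn ℝ X (g k))
    (hgd : ∀ (k : Fin m) z, HasGradientAt (g k) (Gg k z) z)
    (hLg : ∀ k, 0 ≤ Lg k)
    (hGgLip : ∀ (k : Fin m), ∀ z ∈ X, ∀ w ∈ X, ‖Gg k z - Gg k w‖ ≤ Lg k * ‖z - w‖)
    (hgLip : ∀ z ∈ X, ∀ w ∈ X, ‖gvec g z - gvec g w‖ ≤ β * ‖z - w‖)
    (hgC : ∀ z ∈ X, ‖gvec g z‖ ≤ C)
    (xstar : EuclideanSpace ℝ (Fin n)) (hxs : xstar ∈ X)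
    (hxsFeas : ∀ k, g k xstar ≤ 0)
    (hxsOpt : ∀ z ∈ X, (∀ k, g k z ≤ 0) → f xstar ≤ f z)
    (lam : EuclideanSpace ℝ (Fin m)) (hlam : ∀ k, 0 ≤ lam k)
    (hduality : IsGLB ((fun z => f z + ∑ k, lam k * g k z) '' X) (f xstar))
    (D : ℝ) (hD : D = β ^ 2 + Lf + 2 * ‖lam‖ * ‖Lg‖ + 2 * C * ‖Lg‖)
    (γ : ℝ) (hγ : 0 < γ)
    (hγcond : D + ‖Lg‖ * R / Real.sqrt γ - 1 / γ ≤ 0)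
    (x : ℕ → EuclideanSpace ℝ (Fin n)) (hxX : ∀ t, x t ∈ X)
    (Q : ℕ → EuclideanSpace ℝ (Fin m))
    (hQ0 : ∀ k, Q 0 k = max 0 (-(g k (x 0))))
    (hQr : ∀ (t : ℕ) (k : Fin m),
      Q (t + 1) k = max (-(g k (x (t + 1)))) (Q t k + g k (x (t + 1))))
    (d : ℕ → EuclideanSpace ℝ (Fin n))
    (hd : ∀ t, d t = Gf (x t) + ∑ k, (Q t k + g k (x t)) • Gg k (x t))
    (hproj : ∀ t, ∀ y ∈ X,
      ‖x (t + 1) - (x t - γ • d t)‖ ≤ ‖y - (x t - γ • d t)‖) :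
    ∀ t : ℕ,
      (1 / 2) * (‖Q (t + 1)‖ ^ 2 - ‖Q t‖ ^ 2) + f (x (t + 1)) ≤
        f xstar + (1 / (2 * γ)) * (‖xstar - x t‖ ^ 2 - ‖xstar - x (t + 1)‖ ^ 2)
          + (1 / 2) * (‖gvec g (x (t + 1))‖ ^ 2 - ‖gvec g (x t)‖ ^ 2) :=
  drift_plus_penalty_refined_bound_general X hXcv R hR f Gf g Gg Lf Lg β C hf hfd hGfLip hg hgd
    hGgLip hgLip hgC xstar hxs hxsFeas lam hlam hduality D hD γ hγ hγcond x hxX Q hQ0 hQr d hd hproj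
end

section
/- Let x* ∈ X be an optimal solution of min{ f(x) : g_k(x) ≤ 0 ∀k, x ∈ X }, let λ* ≥ 0 (componentwise) satisfy inf_{x ∈ X}( f(x) + Σ_k λ*_k g_k(x) ) = f(x*), and set D = β² + L_f + 2‖λ*‖‖L_g‖ + 2C‖L_g‖. If the step size γ > 0 satisfies D + ‖L_g‖·R/√γ − 1/γ ≤ 0, then for every t ≥ 1 the iterates of the algorithm satisfy Σ_{τ=0}^{t−1} f(x(τ)) ≤ t·f(x*) + R²/(2γ). -/
open Set Finset AffineMap RealInnerProductSpace

theorem norm_add_sum_smul_sub_le_s12 {V ι : Type*} [SeminormedAddCommGroup V] [NormedSpace ℝ V]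
    (t : Finset ι) {a b : V} {u v : ι → V} {w L : ι → ℝ} {c r : ℝ} (hab : ‖a - b‖ ≤ c * r)
    (huv : ∀ i ∈ t, ‖u i - v i‖ ≤ L i * r) (hw : ∀ i ∈ t, 0 ≤ w i) :
    ‖(a + ∑ i ∈ t, w i • u i) - (b + ∑ i ∈ t, w i • v i)‖ ≤ (c + ∑ i ∈ t, w i * L i) * r := by
  rw [add_sub_add_comm, ← sum_sub_distrib, add_mul, sum_mul]
  refine (norm_add_le _ _).trans (add_le_add hab ((norm_sum_le _ _).trans (sum_le_sum ?_)))
  intro i hi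
  rw [← smul_sub, norm_smul, Real.norm_of_nonneg (hw i hi), mul_assoc]
  exact mul_le_mul_of_nonneg_left (huv i hi) (hw i hi)

theorem ConvexOn.add_sum_mul {E ι : Type*} [AddCommGroup E] [Module ℝ E] {s : Set E} (t : Finset ι)
    {f : E → ℝ} {g : ι → E → ℝ} {w : ι → ℝ} (hf : ConvexOn ℝ s f)
    (hg : ∀ i ∈ t, ConvexOn ℝ s (g i)) (hw : ∀ i ∈ t, 0 ≤ w i) :
    ConvexOn ℝ s (fun y => f y + ∑ i ∈ t, w i * g i y) := by
  induction t using Finset.cons_induction with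
  | empty => simpa using hf
  | cons i t hi ih =>
    have hi' := ((hg i (mem_cons_self i t)).smul (hw i (mem_cons_self i t)))
    have hrest := ih (fun j hj => hg j (mem_cons_of_mem hj)) fun j hj => hw j (mem_cons_of_mem hj)
    have hsplit : (fun y => f y + ∑ j ∈ cons i t hi, w j * g j y) =
        (fun y => f y + ∑ j ∈ t, w j * g j y) + fun y => w i • g i y := by
      ext y
      simp only [sum_cons, smul_eq_mul, Pi.add_apply]
      ring
    rw [hsplit]
    exact hrest.add hi'

section Smooth

variable {E : Type*} [NormedAddCommGroup E] [InnerProductSpace ℝ E]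
  {f : E → ℝ} {F : E → E} {f' : E} {s : Set E} {x y : E}

theorem Convex.inner_sub_le_zero_of_forall_norm_sub_le {u v w : E} (hs : Convex ℝ s) (hv : v ∈ s)
    (hmin : ∀ z ∈ s, ‖v - u‖ ≤ ‖z - u‖) (hw : w ∈ s) : ⟪u - v, w - v⟫ ≤ 0 := by
  have : Nonempty s := ⟨⟨v, hv⟩⟩
  refine (norm_eq_iInf_iff_real_inner_le_zero hs hv).1 (le_antisymm ?_ ?_) w hw
  · exact le_ciInf fun z => by simpa only [norm_sub_rev u] using hmin z z.2
  · exact ciInf_le ⟨0, forall_mem_range.2 fun z : s => norm_nonneg (u - z)⟩ ⟨v, hv⟩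

variable [CompleteSpace E]

theorem HasGradientAt.add_sum_mul {ι : Type*} (t : Finset ι) {g : ι → E → ℝ} {g' : ι → E}
    (w : ι → ℝ) (hf : HasGradientAt f f' x) (hg : ∀ i ∈ t, HasGradientAt (g i) (g' i) x) :
    HasGradientAt (fun y => f y + ∑ i ∈ t, w i * g i y) (f' + ∑ i ∈ t, w i • g' i) x := by
  rw [hasGradientAt_iff_hasFDerivAt] at hf ⊢
  have hsum := HasFDerivAt.fun_sum fun i hi =>
    ((hasGradientAt_iff_hasFDerivAt.1 (hg i hi)).const_mul (w i))
  refine (hf.fun_add hsum).congr_fderiv ?_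
  rw [map_add, map_sum]
  simp only [map_smul]

theorem HasGradientAt.hasDerivAt_comp_lineMap_s12 {t : ℝ} (h : HasGradientAt f f' (lineMap x y t)) :
    HasDerivAt (f ∘ lineMap x y) ⟪f', y - x⟫ t := by
  have := h.hasFDerivAt.comp_hasDerivAt t hasDerivAt_lineMap
  simpa [InnerProductSpace.toDual_apply_apply] using this

theorem ConvexOn.add_inner_le_of_hasGradientAt_s12 (hf : ConvexOn ℝ s f) (hx : x ∈ s) (hy : y ∈ s)
    (h : HasGradientAt f f' x) : f x + ⟪f', y - x⟫ ≤ f y := by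
  have hline := hf.comp_affineMap (lineMap x y : ℝ →ᵃ[ℝ] E)
  have hderiv : HasDerivAt (f ∘ lineMap x y) ⟪f', y - x⟫ (0 : ℝ) :=
    HasGradientAt.hasDerivAt_comp_lineMap_s12 (by simpa using h)
  have := hline.le_slope_of_hasDerivAt (x := 0) (y := 1) (by simpa using hx) (by simpa using hy)
    one_pos hderiv
  simp only [slope_def_field, Function.comp_apply, lineMap_apply_one, lineMap_apply_zero,
    sub_zero, div_one] at this
  linarith

theorem Convex.le_add_inner_add_mul_sq_of_lipschitz_gradient {L : ℝ} (hs : Convex ℝ s)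
    (hF : ∀ z ∈ s, HasGradientAt f (F z) z) (hL : ∀ z ∈ s, ∀ w ∈ s, ‖F z - F w‖ ≤ L * ‖z - w‖)
    (hx : x ∈ s) (hy : y ∈ s) : f y ≤ f x + ⟪F x, y - x⟫ + L / 2 * ‖y - x‖ ^ 2 := by
  set φ : ℝ → ℝ := fun t => f (lineMap x y t) - t * ⟪F x, y - x⟫ - L / 2 * t ^ 2 * ‖y - x‖ ^ 2
    with hφ
  have hderiv : ∀ t ∈ Icc (0 : ℝ) 1, HasDerivAt φ
      (⟪F (lineMap x y t), y - x⟫ - ⟪F x, y - x⟫ - L * t * ‖y - x‖ ^ 2) t := by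
    intro t ht
    have := (((hF _ (hs.lineMap_mem hx hy ht)).hasDerivAt_comp_lineMap_s12).sub
      ((hasDerivAt_id t).mul_const ⟪F x, y - x⟫)).sub
      (((hasDerivAt_pow 2 t).const_mul (L / 2)).mul_const (‖y - x‖ ^ 2))
    exact this.congr_deriv (by ring)
  have hslope : ∀ t ∈ Icc (0 : ℝ) 1,
      ⟪F (lineMap x y t), y - x⟫ - ⟪F x, y - x⟫ ≤ L * t * ‖y - x‖ ^ 2 := by
    intro t ht
    have hdist : ‖lineMap x y t - x‖ = t * ‖y - x‖ := by
      rw [lineMap_apply_module', add_sub_cancel_right, norm_smul, Real.norm_of_nonneg ht.1]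
    calc ⟪F (lineMap x y t), y - x⟫ - ⟪F x, y - x⟫ = ⟪F (lineMap x y t) - F x, y - x⟫ :=
          (inner_sub_left _ _ _).symm
      _ ≤ ‖F (lineMap x y t) - F x‖ * ‖y - x‖ := real_inner_le_norm _ _
      _ ≤ L * ‖lineMap x y t - x‖ * ‖y - x‖ := by
          gcongr; exact hL _ (hs.lineMap_mem hx hy ht) _ hx
      _ = L * t * ‖y - x‖ ^ 2 := by rw [hdist]; ring
  have hanti : AntitoneOn φ (Icc 0 1) :=
    antitoneOn_of_hasDerivWithinAt_nonpos (convex_Icc 0 1)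
      (fun t ht => (hderiv t ht).continuousAt.continuousWithinAt)
      (fun t ht => (hderiv t (interior_subset ht)).hasDerivWithinAt)
      (fun t ht => by linarith [hslope t (interior_subset ht)])
  have := hanti (left_mem_Icc.2 zero_le_one) (right_mem_Icc.2 zero_le_one) zero_le_one
  simp only [hφ, lineMap_apply_zero, lineMap_apply_one] at this
  linarith

theorem ConvexOn.le_of_projected_gradient_step {L γ : ℝ} {x' z : E} (hf : ConvexOn ℝ s f)
    (hF : ∀ z ∈ s, HasGradientAt f (F z) z) (hL : ∀ z ∈ s, ∀ w ∈ s, ‖F z - F w‖ ≤ L * ‖z - w‖)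
    (hγ : 0 ≤ γ) (hx : x ∈ s) (hx' : x' ∈ s) (hz : z ∈ s)
    (hproj : ∀ w ∈ s, ‖x' - (x - γ • F x)‖ ≤ ‖w - (x - γ • F x)‖) :
    2 * γ * f x' ≤ 2 * γ * f z + (‖z - x‖ ^ 2 - ‖z - x'‖ ^ 2) + (γ * L - 1) * ‖x' - x‖ ^ 2 := by
  have hvi := hf.1.inner_sub_le_zero_of_forall_norm_sub_le hx' hproj hz
  have hdescent := hf.1.le_add_inner_add_mul_sq_of_lipschitz_gradient hF hL hx hx'
  have hconvex := hf.add_inner_le_of_hasGradientAt_s12 hx hz (hF x hx)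
  have hvi' : ⟪x - x', z - x'⟫ - γ * ⟪F x, z - x'⟫ ≤ 0 := by
    rwa [show x - γ • F x - x' = (x - x') - γ • F x by abel, inner_sub_left,
      real_inner_smul_left] at hvi
  have hsplit : ‖z - x‖ ^ 2 = ‖z - x'‖ ^ 2 - 2 * ⟪x - x', z - x'⟫ + ‖x' - x‖ ^ 2 := by
    rw [show z - x = (z - x') + (x' - x) by abel, norm_add_sq_real, real_inner_comm,
      show x' - x = -(x - x') by abel, inner_neg_left]
    ring
  have hgrad : ⟪F x, z - x⟫ - ⟪F x, x' - x⟫ = ⟪F x, z - x'⟫ := by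
    rw [← inner_sub_right, sub_sub_sub_cancel_right]
  have h2γ : 0 ≤ 2 * γ := by positivity
  nlinarith [mul_le_mul_of_nonneg_left hdescent h2γ, mul_le_mul_of_nonneg_left hconvex h2γ]

end Smooth

theorem lagrangian_le_of_projected_gradient_step {E ι : Type*} [NormedAddCommGroup E]
    [InnerProductSpace ℝ E] [CompleteSpace E] [Fintype ι] {X : Set E} {f : E → ℝ} {Gf : E → E}
    {g : ι → E → ℝ} {Gg : ι → E → E} {Lf γ : ℝ} {Lg w : ι → ℝ} {x x' xstar : E}
    (hf : ConvexOn ℝ X f) (hfd : ∀ z ∈ X, HasGradientAt f (Gf z) z)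
    (hGf : ∀ z ∈ X, ∀ y ∈ X, ‖Gf z - Gf y‖ ≤ Lf * ‖z - y‖)
    (hg : ∀ k, ConvexOn ℝ X (g k)) (hgd : ∀ k, ∀ z ∈ X, HasGradientAt (g k) (Gg k z) z)
    (hGg : ∀ k, ∀ z ∈ X, ∀ y ∈ X, ‖Gg k z - Gg k y‖ ≤ Lg k * ‖z - y‖)
    (hw : ∀ k, 0 ≤ w k) (hγ : 0 ≤ γ) (hx : x ∈ X) (hx' : x' ∈ X) (hxs : xstar ∈ X)
    (hxsFeas : ∀ k, g k xstar ≤ 0)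
    (hproj : ∀ y ∈ X, ‖x' - (x - γ • (Gf x + ∑ k, w k • Gg k x))‖ ≤
      ‖y - (x - γ • (Gf x + ∑ k, w k • Gg k x))‖) :
    2 * γ * (f x' + ∑ k, w k * g k x') ≤ 2 * γ * f xstar + (‖xstar - x‖ ^ 2 - ‖xstar - x'‖ ^ 2)
      + (γ * (Lf + ∑ k, w k * Lg k) - 1) * ‖x' - x‖ ^ 2 := by
  have hstep := ConvexOn.le_of_projected_gradient_step (F := fun z => Gf z + ∑ k, w k • Gg k z)
    (hf.add_sum_mul univ (fun k _ => hg k) fun k _ => hw k)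
    (fun z hz => (hfd z hz).add_sum_mul univ w fun k _ => hgd k z hz)
    (fun z hz y hy => norm_add_sum_smul_sub_le_s12 univ (hGf z hz y hy) (fun k _ => hGg k z hz y hy)
      fun k _ => hw k) hγ hx hx' hxs hproj
  have hpenalty : ∑ k, w k * g k xstar ≤ 0 :=
    sum_nonpos fun k _ => mul_nonpos_of_nonneg_of_nonpos (hw k) (hxsFeas k)
  nlinarith [mul_le_mul_of_nonneg_left hpenalty (by positivity : (0 : ℝ) ≤ 2 * γ)]

theorem EuclideanSpace.real_inner_eq_sum {ι : Type*} [Fintype ι] (u v : EuclideanSpace ℝ ι) :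
    ⟪u, v⟫ = ∑ k, u k * v k := by
  simp [PiLp.inner_apply, mul_comm]

theorem EuclideanSpace.norm_le_norm_of_abs_le {ι : Type*} [Fintype ι] {u v : EuclideanSpace ℝ ι}
    (h : ∀ k, |u k| ≤ |v k|) : ‖u‖ ≤ ‖v‖ := by
  rw [← sq_le_sq₀ (norm_nonneg u) (norm_nonneg v), EuclideanSpace.real_norm_sq_eq,
    EuclideanSpace.real_norm_sq_eq]
  exact sum_le_sum fun k _ => sq_le_sq.2 (h k)

theorem abs_le_max_neg_add {q a : ℝ} (hq : 0 ≤ q) : |a| ≤ max (-a) (q + a) :=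
  abs_le'.2 ⟨le_max_of_le_right (by linarith), le_max_left _ _⟩

theorem sq_max_neg_add_le (q a : ℝ) :
    max (-a) (q + a) ^ 2 ≤ q ^ 2 + 2 * q * a + 2 * a ^ 2 := by
  rcases max_cases (-a) (q + a) with ⟨h, -⟩ | ⟨h, -⟩ <;> rw [h] <;> nlinarith [sq_nonneg (q + a)]

def IsVirtualQueue {ι : Type*} (a Q : ℕ → EuclideanSpace ℝ ι) : Prop :=
  (∀ k, Q 0 k = max 0 (-a 0 k)) ∧ ∀ t k, Q (t + 1) k = max (-a (t + 1) k) (Q t k + a (t + 1) k)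

namespace IsVirtualQueue

variable {ι : Type*} {a Q : ℕ → EuclideanSpace ℝ ι}

theorem nonneg (hQ : IsVirtualQueue a Q) (t : ℕ) (k : ι) : 0 ≤ Q t k := by
  induction t with
  | zero => rw [hQ.1]; exact le_max_left _ _
  | succ t ih => rw [hQ.2]; exact (abs_nonneg _).trans (abs_le_max_neg_add ih)

theorem add_nonneg (hQ : IsVirtualQueue a Q) (t : ℕ) (k : ι) : 0 ≤ Q t k + a t k := by
  cases t with
  | zero => rw [hQ.1]; linarith [le_max_right 0 (-a 0 k)]
  | succ t => rw [hQ.2]; linarith [le_max_left (-a (t + 1) k) (Q t k + a (t + 1) k)]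

theorem sum_le (hQ : IsVirtualQueue a Q) (t : ℕ) (k : ι) :
    ∑ τ ∈ range t, a (τ + 1) k ≤ Q t k := by
  induction t with
  | zero => simpa using hQ.nonneg 0 k
  | succ t ih =>
    rw [sum_range_succ, hQ.2]
    linarith [le_max_right (-a (t + 1) k) (Q t k + a (t + 1) k)]

variable [Fintype ι]

theorem norm_zero_le (hQ : IsVirtualQueue a Q) : ‖Q 0‖ ≤ ‖a 0‖ :=
  EuclideanSpace.norm_le_norm_of_abs_le fun k => by
    rw [hQ.1, abs_of_nonneg (le_max_left _ _)]
    exact max_le (abs_nonneg _) (neg_le_abs _)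

theorem norm_succ_le (hQ : IsVirtualQueue a Q) (t : ℕ) : ‖a (t + 1)‖ ≤ ‖Q (t + 1)‖ :=
  EuclideanSpace.norm_le_norm_of_abs_le fun k => by
    rw [abs_of_nonneg (hQ.nonneg _ k), hQ.2]
    exact abs_le_max_neg_add (hQ.nonneg t k)

theorem norm_sq_succ_le (hQ : IsVirtualQueue a Q) (t : ℕ) :
    ‖Q (t + 1)‖ ^ 2 ≤ ‖Q t‖ ^ 2 + 2 * ⟪Q t, a (t + 1)⟫ + 2 * ‖a (t + 1)‖ ^ 2 := by
  simp only [EuclideanSpace.real_norm_sq_eq, EuclideanSpace.real_inner_eq_sum, mul_sum,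
    ← sum_add_distrib]
  gcongr with k
  rw [hQ.2, ← mul_assoc]
  exact sq_max_neg_add_le _ _

theorem norm_sq_succ_sub_norm_sq_le (hQ : IsVirtualQueue a Q) (t : ℕ) :
    ‖Q (t + 1)‖ ^ 2 - ‖Q t‖ ^ 2 + (‖a t‖ ^ 2 - ‖a (t + 1)‖ ^ 2) - ‖a (t + 1) - a t‖ ^ 2 ≤
      2 * ⟪Q t + a t, a (t + 1)⟫ := by
  rw [norm_sub_sq_real, inner_add_left, real_inner_comm (a t)]
  linarith [hQ.norm_sq_succ_le t]

theorem sum_inner_le (hQ : IsVirtualQueue a Q) {lam : EuclideanSpace ℝ ι} (hlam : ∀ k, 0 ≤ lam k)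
    (t : ℕ) : ∑ τ ∈ range t, ⟪lam, a (τ + 1)⟫ ≤ ⟪lam, Q t⟫ := by
  simp only [EuclideanSpace.real_inner_eq_sum]
  rw [sum_comm]
  gcongr with k
  rw [← mul_sum]
  exact mul_le_mul_of_nonneg_left (hQ.sum_le t k) (hlam k)

end IsVirtualQueue

theorem sum_range_add_sub_le {u Φ : ℕ → ℝ} {c : ℝ} {t : ℕ}
    (h : ∀ τ < t, u τ + (Φ (τ + 1) - Φ τ) ≤ c) :
    ∑ τ ∈ range t, u τ + (Φ t - Φ 0) ≤ t * c := by
  induction t with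
  | zero => simp
  | succ t ih =>
    rw [sum_range_succ]
    push_cast
    linarith [ih fun τ hτ => h τ (by omega), h t (by omega)]

theorem le_two_mul_add_add_of_sq_sub_le {q l c r : ℝ} (hl : 0 ≤ l) (hc : 0 ≤ c) (hr : 0 ≤ r)
    (h : q ^ 2 - 2 * l * q ≤ c ^ 2 + r ^ 2) : q ≤ 2 * l + c + r := by
  by_contra! hq
  nlinarith [mul_nonneg hc hr, mul_nonneg hl (add_nonneg hc hr)]

theorem le_of_drift_plus_penalty_of_dual {γ c l C R : ℝ} {q u Φ : ℕ → ℝ} (hγ : 0 < γ) (hl : 0 ≤ l)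
    (hC : 0 ≤ C) (hR : 0 ≤ R)
    (hstep : ∀ τ, q τ ≤ 2 * l + C + R / √γ → 2 * γ * u τ + (Φ (τ + 1) - Φ τ) ≤ 2 * γ * c)
    (hΦ₀ : Φ 0 ≤ R ^ 2) (hΦ : ∀ t, γ * q t ^ 2 - γ * C ^ 2 ≤ Φ t)
    (hdual : ∀ t, t * c - l * q t ≤ ∑ τ ∈ range t, u τ) (t : ℕ) :
    q t ≤ 2 * l + C + R / √γ := by
  induction t using Nat.strong_induction_on with
  | _ t ih =>
    have hsum := sum_range_add_sub_le fun τ hτ => hstep τ (ih τ hτ)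
    rw [← mul_sum] at hsum
    have hsq : (R / √γ) ^ 2 = R ^ 2 / γ := by rw [div_pow, Real.sq_sqrt hγ.le]
    refine le_two_mul_add_add_of_sq_sub_le hl hC (by positivity) ?_
    have key : γ * (q t ^ 2 - 2 * l * q t - C ^ 2) ≤ R ^ 2 := by
      linarith [mul_le_mul_of_nonneg_left (hdual t) (by positivity : (0 : ℝ) ≤ 2 * γ), hΦ t]
    rw [hsq, ← sub_le_iff_le_add', le_div_iff₀ hγ]
    linarith

theorem sum_objective_ge_of_dual {n m : ℕ} {X : Set (EuclideanSpace ℝ (Fin n))}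
    {f : EuclideanSpace ℝ (Fin n) → ℝ} {g : Fin m → EuclideanSpace ℝ (Fin n) → ℝ}
    {x : ℕ → EuclideanSpace ℝ (Fin n)} {Q : ℕ → EuclideanSpace ℝ (Fin m)}
    {lam : EuclideanSpace ℝ (Fin m)} {c : ℝ} (hlam : ∀ k, 0 ≤ lam k)
    (hdual : c ∈ lowerBounds ((fun z => f z + ∑ k, lam k * g k z) '' X)) (hxX : ∀ t, x t ∈ X)
    (hQ : IsVirtualQueue (fun t => gvec g (x t)) Q) (t : ℕ) :
    t * c - ‖lam‖ * ‖Q t‖ ≤ ∑ τ ∈ range t, f (x (τ + 1)) := by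
  have hterm : ∀ τ, c ≤ f (x (τ + 1)) + ⟪lam, gvec g (x (τ + 1))⟫ := fun τ => by
    simpa [EuclideanSpace.real_inner_eq_sum, gvec] using hdual ⟨x (τ + 1), hxX _, rfl⟩
  have hsum := sum_le_sum fun τ (_ : τ ∈ range t) => hterm τ
  rw [sum_const, card_range, nsmul_eq_mul, sum_add_distrib] at hsum
  linarith [hQ.sum_inner_le hlam t, real_inner_le_norm lam (Q t)]

theorem mul_smoothness_le_one_of_norm_le {ι : Type*} [Fintype ι] {γ Lf β C R : ℝ}
    {lam Lg q a : EuclideanSpace ℝ ι} (hγ : 0 < γ)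
    (hγcond : β ^ 2 + Lf + 2 * ‖lam‖ * ‖Lg‖ + 2 * C * ‖Lg‖ + ‖Lg‖ * R / √γ - 1 / γ ≤ 0)
    (hq : ‖q‖ ≤ 2 * ‖lam‖ + C + R / √γ) (ha : ‖a‖ ≤ C) :
    γ * (Lf + ⟪q + a, Lg⟫ + β ^ 2) ≤ 1 := by
  have hinner : ⟪q + a, Lg⟫ ≤ (2 * ‖lam‖ + 2 * C + R / √γ) * ‖Lg‖ :=
    calc ⟪q + a, Lg⟫ ≤ ‖q + a‖ * ‖Lg‖ := real_inner_le_norm _ _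
      _ ≤ (‖q‖ + ‖a‖) * ‖Lg‖ := by gcongr; exact norm_add_le q a
      _ ≤ (2 * ‖lam‖ + 2 * C + R / √γ) * ‖Lg‖ :=
          mul_le_mul_of_nonneg_right (by linarith) (norm_nonneg _)
  rw [← le_div_iff₀' hγ]
  linarith [show ‖Lg‖ * R / √γ = R / √γ * ‖Lg‖ by ring]

theorem drift_plus_penalty_le {n m : ℕ} {X : Set (EuclideanSpace ℝ (Fin n))}
    {f : EuclideanSpace ℝ (Fin n) → ℝ} {Gf : EuclideanSpace ℝ (Fin n) → EuclideanSpace ℝ (Fin n)}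
    {g : Fin m → EuclideanSpace ℝ (Fin n) → ℝ}
    {Gg : Fin m → EuclideanSpace ℝ (Fin n) → EuclideanSpace ℝ (Fin n)}
    {Lf β γ : ℝ} {Lg : EuclideanSpace ℝ (Fin m)} {x : ℕ → EuclideanSpace ℝ (Fin n)}
    {Q : ℕ → EuclideanSpace ℝ (Fin m)} {xstar : EuclideanSpace ℝ (Fin n)} {τ : ℕ}
    (hf : ConvexOn ℝ X f) (hfd : ∀ z, HasGradientAt f (Gf z) z)
    (hGfLip : ∀ z ∈ X, ∀ w ∈ X, ‖Gf z - Gf w‖ ≤ Lf * ‖z - w‖)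
    (hg : ∀ k, ConvexOn ℝ X (g k)) (hgd : ∀ (k : Fin m) z, HasGradientAt (g k) (Gg k z) z)
    (hGgLip : ∀ (k : Fin m), ∀ z ∈ X, ∀ w ∈ X, ‖Gg k z - Gg k w‖ ≤ Lg k * ‖z - w‖)
    (hgLip : ∀ z ∈ X, ∀ w ∈ X, ‖gvec g z - gvec g w‖ ≤ β * ‖z - w‖)
    (hxs : xstar ∈ X) (hxsFeas : ∀ k, g k xstar ≤ 0) (hγ : 0 ≤ γ)
    (hQ : IsVirtualQueue (fun t => gvec g (x t)) Q) (hx : x τ ∈ X) (hx' : x (τ + 1) ∈ X)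
    (hproj : ∀ y ∈ X,
      ‖x (τ + 1) - (x τ - γ • (Gf (x τ) + ∑ k, (Q τ k + g k (x τ)) • Gg k (x τ)))‖ ≤
        ‖y - (x τ - γ • (Gf (x τ) + ∑ k, (Q τ k + g k (x τ)) • Gg k (x τ)))‖)
    (hstep : γ * (Lf + ⟪Q τ + gvec g (x τ), Lg⟫ + β ^ 2) ≤ 1) :
    2 * γ * f (x (τ + 1)) +
      ((γ * (‖Q (τ + 1)‖ ^ 2 - ‖gvec g (x (τ + 1))‖ ^ 2) + ‖xstar - x (τ + 1)‖ ^ 2) -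
        (γ * (‖Q τ‖ ^ 2 - ‖gvec g (x τ)‖ ^ 2) + ‖xstar - x τ‖ ^ 2)) ≤ 2 * γ * f xstar := by
  have hlagr := lagrangian_le_of_projected_gradient_step (w := fun k => Q τ k + g k (x τ)) hf
    (fun z _ => hfd z) hGfLip hg (fun k z _ => hgd k z) hGgLip (fun k => hQ.add_nonneg τ k) hγ hx
    hx' hxs hxsFeas hproj
  have hpenalty : ∑ k, (Q τ k + g k (x τ)) * g k (x (τ + 1)) =
      ⟪Q τ + gvec g (x τ), gvec g (x (τ + 1))⟫ := by
    simp [EuclideanSpace.real_inner_eq_sum, gvec]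
  have hsmooth : ∑ k, (Q τ k + g k (x τ)) * Lg k = ⟪Q τ + gvec g (x τ), Lg⟫ := by
    simp [EuclideanSpace.real_inner_eq_sum, gvec]
  rw [hpenalty, hsmooth] at hlagr
  have hdrift := hQ.norm_sq_succ_sub_norm_sq_le τ
  have hlip : ‖gvec g (x (τ + 1)) - gvec g (x τ)‖ ^ 2 ≤ β ^ 2 * ‖x (τ + 1) - x τ‖ ^ 2 := by
    rw [← mul_pow]
    exact pow_le_pow_left₀ (norm_nonneg _) (hgLip _ hx' _ hx) 2
  have hslack : 0 ≤ (1 - γ * (Lf + ⟪Q τ + gvec g (x τ), Lg⟫ + β ^ 2)) * ‖x (τ + 1) - x τ‖ ^ 2 :=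
    mul_nonneg (sub_nonneg.2 hstep) (sq_nonneg _)
  nlinarith [mul_le_mul_of_nonneg_left hdrift hγ, mul_le_mul_of_nonneg_left hlip hγ]

/-- Indexing: `x 0` is the initial point `x(−1)` and `x (t + 1)` is the iterate `x(t)`,
while `Q t` is `Q(t)`. -/
theorem objective_partial_sum_bound_general {n m : ℕ}
    (X : Set (EuclideanSpace ℝ (Fin n)))
    (R : ℝ) (hR : ∀ z ∈ X, ∀ w ∈ X, ‖z - w‖ ≤ R)
    (f : EuclideanSpace ℝ (Fin n) → ℝ)
    (Gf : EuclideanSpace ℝ (Fin n) → EuclideanSpace ℝ (Fin n))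
    (g : Fin m → EuclideanSpace ℝ (Fin n) → ℝ)
    (Gg : Fin m → EuclideanSpace ℝ (Fin n) → EuclideanSpace ℝ (Fin n))
    (Lf : ℝ) (Lg : EuclideanSpace ℝ (Fin m)) (β C : ℝ)
    (hf : ConvexOn ℝ X f)
    (hfd : ∀ z, HasGradientAt f (Gf z) z)
    (hGfLip : ∀ z ∈ X, ∀ w ∈ X, ‖Gf z - Gf w‖ ≤ Lf * ‖z - w‖)
    (hg : ∀ k, ConvexOn ℝ X (g k))
    (hgd : ∀ (k : Fin m) z, HasGradientAt (g k) (Gg k z) z)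
    (hGgLip : ∀ (k : Fin m), ∀ z ∈ X, ∀ w ∈ X, ‖Gg k z - Gg k w‖ ≤ Lg k * ‖z - w‖)
    (hgLip : ∀ z ∈ X, ∀ w ∈ X, ‖gvec g z - gvec g w‖ ≤ β * ‖z - w‖)
    (hgC : ∀ z ∈ X, ‖gvec g z‖ ≤ C)
    (xstar : EuclideanSpace ℝ (Fin n)) (hxs : xstar ∈ X)
    (hxsFeas : ∀ k, g k xstar ≤ 0)
    (lam : EuclideanSpace ℝ (Fin m)) (hlam : ∀ k, 0 ≤ lam k)
    (hduality : IsGLB ((fun z => f z + ∑ k, lam k * g k z) '' X) (f xstar))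
    (D : ℝ) (hD : D = β ^ 2 + Lf + 2 * ‖lam‖ * ‖Lg‖ + 2 * C * ‖Lg‖)
    (γ : ℝ) (hγ : 0 < γ)
    (hγcond : D + ‖Lg‖ * R / Real.sqrt γ - 1 / γ ≤ 0)
    (x : ℕ → EuclideanSpace ℝ (Fin n)) (hxX : ∀ t, x t ∈ X)
    (Q : ℕ → EuclideanSpace ℝ (Fin m))
    (hQ0 : ∀ k, Q 0 k = max 0 (-(g k (x 0))))
    (hQr : ∀ (t : ℕ) (k : Fin m),
      Q (t + 1) k = max (-(g k (x (t + 1)))) (Q t k + g k (x (t + 1))))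
    (d : ℕ → EuclideanSpace ℝ (Fin n))
    (hd : ∀ t, d t = Gf (x t) + ∑ k, (Q t k + g k (x t)) • Gg k (x t))
    (hproj : ∀ t, ∀ y ∈ X,
      ‖x (t + 1) - (x t - γ • d t)‖ ≤ ‖y - (x t - γ • d t)‖) :
    ∀ t : ℕ, 1 ≤ t →
      ∑ τ ∈ Finset.range t, f (x (τ + 1)) ≤ (t : ℝ) * f xstar + R ^ 2 / (2 * γ) := by
  subst hD
  have hQ : IsVirtualQueue (fun t => gvec g (x t)) Q := ⟨hQ0, hQr⟩
  have hR0 : 0 ≤ R := (norm_nonneg _).trans (hR xstar hxs xstar hxs)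
  have hC0 : 0 ≤ C := (norm_nonneg _).trans (hgC xstar hxs)
  set Φ : ℕ → ℝ := fun t => γ * (‖Q t‖ ^ 2 - ‖gvec g (x t)‖ ^ 2) + ‖xstar - x t‖ ^ 2
  have hstep (τ : ℕ) (hτ : ‖Q τ‖ ≤ 2 * ‖lam‖ + C + R / √γ) :
      2 * γ * f (x (τ + 1)) + (Φ (τ + 1) - Φ τ) ≤ 2 * γ * f xstar :=
    drift_plus_penalty_le hf hfd hGfLip hg hgd hGgLip hgLip hxs hxsFeas hγ.le hQ (hxX τ)
      (hxX (τ + 1)) (hd τ ▸ hproj τ)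
      (mul_smoothness_le_one_of_norm_le hγ hγcond hτ (hgC _ (hxX τ)))
  have hΦ₀ : Φ 0 ≤ R ^ 2 := by
    have hQ₀ := pow_le_pow_left₀ (norm_nonneg _) hQ.norm_zero_le 2
    have hx₀ := pow_le_pow_left₀ (norm_nonneg _) (hR xstar hxs (x 0) (hxX 0)) 2
    nlinarith
  have hΦ_ge (t : ℕ) : γ * ‖Q t‖ ^ 2 - γ * C ^ 2 ≤ Φ t := by
    have := pow_le_pow_left₀ (norm_nonneg _) (hgC _ (hxX t)) 2
    nlinarith [sq_nonneg ‖xstar - x t‖]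
  have hbound := le_of_drift_plus_penalty_of_dual hγ (norm_nonneg lam) hC0 hR0 hstep hΦ₀ hΦ_ge
    (sum_objective_ge_of_dual hlam hduality.1 hxX hQ)
  intro t ht
  obtain ⟨s, rfl⟩ := Nat.exists_eq_add_of_le' ht
  have hsum := sum_range_add_sub_le (t := s + 1) fun τ _ => hstep τ (hbound τ)
  have hΦ_nonneg : 0 ≤ Φ (s + 1) := by
    have := pow_le_pow_left₀ (norm_nonneg _) (hQ.norm_succ_le s) 2
    nlinarith [sq_nonneg ‖xstar - x (s + 1)‖]
  rw [← mul_sum] at hsum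
  rw [← sub_le_iff_le_add', le_div_iff₀ (by positivity)]
  nlinarith

/-- Partial-sum objective bound.
Indexing convention: `x 0` denotes the initial point `x(−1)` and `x (t+1)`
denotes the iterate `x(t)`; thus at iteration `t` of the paper,
`x(t) = x (t+1)`, `x(t−1) = x t`, and `Q(t) = Q t`. -/
theorem objective_partial_sum_bound {n m : ℕ}
    (X : Set (EuclideanSpace ℝ (Fin n)))
    (hXne : X.Nonempty) (hXcv : Convex ℝ X) (hXcp : IsCompact X)
    (R : ℝ) (hR : ∀ z ∈ X, ∀ w ∈ X, ‖z - w‖ ≤ R)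
    (f : EuclideanSpace ℝ (Fin n) → ℝ)
    (Gf : EuclideanSpace ℝ (Fin n) → EuclideanSpace ℝ (Fin n))
    (g : Fin m → EuclideanSpace ℝ (Fin n) → ℝ)
    (Gg : Fin m → EuclideanSpace ℝ (Fin n) → EuclideanSpace ℝ (Fin n))
    (Lf : ℝ) (Lg : EuclideanSpace ℝ (Fin m)) (β C : ℝ)
    (hf : ConvexOn ℝ X f)
    (hfd : ∀ z, HasGradientAt f (Gf z) z)
    (hLf : 0 ≤ Lf)
    (hGfLip : ∀ z ∈ X, ∀ w ∈ X, ‖Gf z - Gf w‖ ≤ Lf * ‖z - w‖)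
    (hg : ∀ k, ConvexOn ℝ X (g k))
    (hgd : ∀ (k : Fin m) z, HasGradientAt (g k) (Gg k z) z)
    (hLg : ∀ k, 0 ≤ Lg k)
    (hGgLip : ∀ (k : Fin m), ∀ z ∈ X, ∀ w ∈ X, ‖Gg k z - Gg k w‖ ≤ Lg k * ‖z - w‖)
    (hgLip : ∀ z ∈ X, ∀ w ∈ X, ‖gvec g z - gvec g w‖ ≤ β * ‖z - w‖)
    (hgC : ∀ z ∈ X, ‖gvec g z‖ ≤ C)
    (xstar : EuclideanSpace ℝ (Fin n)) (hxs : xstar ∈ X)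
    (hxsFeas : ∀ k, g k xstar ≤ 0)
    (hxsOpt : ∀ z ∈ X, (∀ k, g k z ≤ 0) → f xstar ≤ f z)
    (lam : EuclideanSpace ℝ (Fin m)) (hlam : ∀ k, 0 ≤ lam k)
    (hduality : IsGLB ((fun z => f z + ∑ k, lam k * g k z) '' X) (f xstar))
    (D : ℝ) (hD : D = β ^ 2 + Lf + 2 * ‖lam‖ * ‖Lg‖ + 2 * C * ‖Lg‖)
    (γ : ℝ) (hγ : 0 < γ)
    (hγcond : D + ‖Lg‖ * R / Real.sqrt γ - 1 / γ ≤ 0)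
    (x : ℕ → EuclideanSpace ℝ (Fin n)) (hxX : ∀ t, x t ∈ X)
    (Q : ℕ → EuclideanSpace ℝ (Fin m))
    (hQ0 : ∀ k, Q 0 k = max 0 (-(g k (x 0))))
    (hQr : ∀ (t : ℕ) (k : Fin m),
      Q (t + 1) k = max (-(g k (x (t + 1)))) (Q t k + g k (x (t + 1))))
    (d : ℕ → EuclideanSpace ℝ (Fin n))
    (hd : ∀ t, d t = Gf (x t) + ∑ k, (Q t k + g k (x t)) • Gg k (x t))
    (hproj : ∀ t, ∀ y ∈ X,
      ‖x (t + 1) - (x t - γ • d t)‖ ≤ ‖y - (x t - γ • d t)‖) :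
    ∀ t : ℕ, 1 ≤ t →
      ∑ τ ∈ Finset.range t, f (x (τ + 1)) ≤ (t : ℝ) * f xstar + R ^ 2 / (2 * γ) :=
  objective_partial_sum_bound_general X R hR f Gf g Gg Lf Lg β C hf hfd hGfLip hg hgd hGgLip hgLip
    hgC xstar hxs hxsFeas lam hlam hduality D hD γ hγ hγcond x hxX Q hQ0 hQr d hd hproj
end
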